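/- Let φ ∈ C²((0,∞); ℝ) and F > 0. Then for every u ∈ 𝒰, E_qnl''(y_F)[u,u] = A_F ‖u'‖²_{ℓ²_ε} − ε³ φ''(2F) Σ_{ℓ=−K−1}^{K+1} |u''_ℓ|². -/

import Mathlib

open Finset Real

noncomputable section

/-- The index set `{-N+1, ..., N}` of one period. -/
def idx (N : ℕ) : Finset ℤ := Finset.Icc (-(N : ℤ) + 1) (N : ℤ)

/-- The space 𝒰 of 2N-periodic displacements with zero mean. -/
def uSet (N : ℕ) : Set (ℤ → ℝ) :=
  {u | (∀ ℓ : ℤ, u (ℓ + 2 * (N : ℤ)) = u ℓ) ∧ ∑ ℓ ∈ idx N, u ℓ = 0}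

/-- Backward difference `v'_ℓ = ε⁻¹ (v_ℓ - v_{ℓ-1})`, with `ε = 1/N`. -/
def bD (N : ℕ) (v : ℤ → ℝ) (ℓ : ℤ) : ℝ := (N : ℝ) * (v ℓ - v (ℓ - 1))

/-- Centered second difference `v''_ℓ = ε⁻² (v_{ℓ+1} - 2 v_ℓ + v_{ℓ-1})`. -/
def cD2 (N : ℕ) (v : ℤ → ℝ) (ℓ : ℤ) : ℝ := (N : ℝ) ^ 2 * (v (ℓ + 1) - 2 * v ℓ + v (ℓ - 1))

/-- Weighted ℓ²-norm. -/
def nl2 (N : ℕ) (v : ℤ → ℝ) : ℝ := Real.sqrt ((N : ℝ)⁻¹ * ∑ ℓ ∈ idx N, (v ℓ) ^ 2)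

/-- Weighted ℓ¹-norm. -/
def nl1 (N : ℕ) (v : ℤ → ℝ) : ℝ := (N : ℝ)⁻¹ * ∑ ℓ ∈ idx N, |v ℓ|

/-- ℓ∞-norm over one period. -/
def nlinf (N : ℕ) (v : ℤ → ℝ) : ℝ := ⨆ ℓ : {ℓ : ℤ // ℓ ∈ idx N}, |v ℓ.1|

/-- Weighted ℓ²-inner product. -/
def iprod (N : ℕ) (u v : ℤ → ℝ) : ℝ := (N : ℝ)⁻¹ * ∑ ℓ ∈ idx N, u ℓ * v ℓ

/-- The uniform deformation `(y_F)_ℓ = F ℓ ε`. -/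
def yF (N : ℕ) (F : ℝ) : ℤ → ℝ := fun ℓ => F * (ℓ : ℝ) * (N : ℝ)⁻¹

/-- First variation `E'(y)[u]`. -/
def dE (E : (ℤ → ℝ) → ℝ) (y u : ℤ → ℝ) : ℝ := deriv (fun t : ℝ => E (y + t • u)) 0

/-- Second variation `E''(y)[u,v]`. -/
def d2E (E : (ℤ → ℝ) → ℝ) (y u v : ℤ → ℝ) : ℝ :=
  deriv (fun s : ℝ => deriv (fun t : ℝ => E (y + s • u + t • v)) 0) 0

/-- The atomistic energy. -/
def Ea (N : ℕ) (φ : ℝ → ℝ) (y : ℤ → ℝ) : ℝ :=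
  (N : ℝ)⁻¹ * ∑ ℓ ∈ idx N, (φ (bD N y ℓ) + φ (bD N y ℓ + bD N y (ℓ + 1)))

/-- The local QC (continuum) energy. -/
def Eqcl (N : ℕ) (φ : ℝ → ℝ) (y : ℤ → ℝ) : ℝ :=
  (N : ℝ)⁻¹ * ∑ ℓ ∈ idx N, (φ (bD N y ℓ) + φ (2 * bD N y ℓ))

/-- The QNL atomistic region `{-K-1, ..., K+1}`. -/
def aQnl (K : ℕ) : Finset ℤ := Finset.Icc (-(K : ℤ) - 1) ((K : ℤ) + 1)

/-- The quasi-nonlocal QC energy. -/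
def Eqnl (N K : ℕ) (φ : ℝ → ℝ) (y : ℤ → ℝ) : ℝ :=
  (N : ℝ)⁻¹ * ((∑ ℓ ∈ idx N, φ (bD N y ℓ))
    + (∑ ℓ ∈ aQnl K, φ (bD N y ℓ + bD N y (ℓ + 1)))
    + ∑ ℓ ∈ idx N \ aQnl K, (φ (2 * bD N y ℓ) + φ (2 * bD N y (ℓ + 1))) / 2)

/-- The QCE atomistic region `{-K, ..., K}`. -/
def aQce (K : ℕ) : Finset ℤ := Finset.Icc (-(K : ℤ)) (K : ℤ)

/-- Atomistic energy contribution of atom ℓ. -/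
def eAtom (N : ℕ) (φ : ℝ → ℝ) (y : ℤ → ℝ) (ℓ : ℤ) : ℝ :=
  (φ (bD N y ℓ) + φ (bD N y (ℓ + 1)) + φ (bD N y (ℓ - 1) + bD N y ℓ)
    + φ (bD N y (ℓ + 1) + bD N y (ℓ + 2))) / 2

/-- Continuum energy contribution of atom ℓ. -/
def eCont (N : ℕ) (φ : ℝ → ℝ) (y : ℤ → ℝ) (ℓ : ℤ) : ℝ :=
  (φ (bD N y ℓ) + φ (bD N y (ℓ + 1)) + φ (2 * bD N y ℓ) + φ (2 * bD N y (ℓ + 1))) / 2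

/-- The energy-based QC energy. -/
def Eqce (N K : ℕ) (φ : ℝ → ℝ) (y : ℤ → ℝ) : ℝ :=
  (N : ℝ)⁻¹ * ((∑ ℓ ∈ idx N \ aQce K, eCont N φ y ℓ) + ∑ ℓ ∈ aQce K, eAtom N φ y ℓ)

/-- The prescribed backward difference `ĝ'` of the ghost-force corrector. -/
def ghatD (K : ℕ) (ℓ : ℤ) : ℝ :=
  if ℓ = -(K : ℤ) - 1 ∨ ℓ = (K : ℤ) + 2 then -(1 / 2)
  else if ℓ = -(K : ℤ) + 1 ∨ ℓ = (K : ℤ) then 1 / 2 else 0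

/-- `μ_ε = 2 sin(π ε / 2) / ε` with `ε = 1/N`. -/
def muEps (N : ℕ) : ℝ := 2 * Real.sin (Real.pi * (N : ℝ)⁻¹ / 2) / (N : ℝ)⁻¹

/-- The `𝒰^{-1,∞}`-norm of a functional `T` on 𝒰. -/
def dualNorm (N : ℕ) (T : (ℤ → ℝ) → ℝ) : ℝ :=
  sSup {r : ℝ | ∃ v ∈ uSet N, nl1 N (bD N v) = 1 ∧ r = T v}

/-! Along the line `r ↦ y_F + r u` every bond of `E_qnl` is an affine function of `r` taking the
value `F` or `2F` at `r = 0`, so the second variation is the quadratic form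
`φ''(F) Σ |u'_ℓ|² + φ''(2F) (Σ_{𝒜} |u'_ℓ + u'_{ℓ+1}|² + 2 Σ_{𝒞} (|u'_ℓ|² + |u'_{ℓ+1}|²))`.
In the atomistic region, `(a + b)² = 2a² + 2b² - (b - a)²` rewrites each next-nearest-neighbour
bond as two Cauchy–Born bonds minus `ε² |u''_ℓ|²`; by periodicity the shifted sum
`Σ |u'_{ℓ+1}|²` equals `Σ |u'_ℓ|²`, which leaves `A_F ‖u'‖²` minus the interface correction. -/

/-- Unlike `deriv (deriv f) x`, this has no junk value, so it obeys the sum and scaling rules. -/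
def HasSecondDerivAt (f : ℝ → ℝ) (f'' x : ℝ) : Prop :=
  ∃ f' : ℝ → ℝ, (∀ᶠ y in nhds x, HasDerivAt f (f' y) y) ∧ HasDerivAt f' f'' x

namespace HasSecondDerivAt

variable {f g : ℝ → ℝ} {f'' g'' x : ℝ}

theorem deriv_deriv (h : HasSecondDerivAt f f'' x) : deriv (deriv f) x = f'' := by
  obtain ⟨f', hf', hf''⟩ := h
  have hderiv : deriv f =ᶠ[nhds x] f' := hf'.mono fun y hy => hy.deriv
  rw [hderiv.deriv_eq, hf''.deriv]

theorem const (c x : ℝ) : HasSecondDerivAt (fun _ => c) 0 x :=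
  ⟨fun _ => 0, Filter.Eventually.of_forall fun y => hasDerivAt_const y c, hasDerivAt_const x 0⟩

theorem add (hf : HasSecondDerivAt f f'' x) (hg : HasSecondDerivAt g g'' x) :
    HasSecondDerivAt (fun y => f y + g y) (f'' + g'') x := by
  obtain ⟨f', hf', hf''⟩ := hf
  obtain ⟨g', hg', hg''⟩ := hg
  exact ⟨fun y => f' y + g' y, (hf'.and hg').mono fun y h => h.1.add h.2, hf''.add hg''⟩

theorem const_mul (c : ℝ) (hf : HasSecondDerivAt f f'' x) :
    HasSecondDerivAt (fun y => c * f y) (c * f'') x := by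
  obtain ⟨f', hf', hf''⟩ := hf
  exact ⟨fun y => c * f' y, hf'.mono fun y h => h.const_mul c, hf''.const_mul c⟩

theorem div_const (hf : HasSecondDerivAt f f'' x) (c : ℝ) :
    HasSecondDerivAt (fun y => f y / c) (f'' / c) x := by
  obtain ⟨f', hf', hf''⟩ := hf
  exact ⟨fun y => f' y / c, hf'.mono fun y h => h.div_const c, hf''.div_const c⟩

theorem sum {ι : Type*} {s : Finset ι} {f : ι → ℝ → ℝ} {f'' : ι → ℝ}
    (h : ∀ i ∈ s, HasSecondDerivAt (f i) (f'' i) x) :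
    HasSecondDerivAt (fun y => ∑ i ∈ s, f i y) (∑ i ∈ s, f'' i) x := by
  induction s using Finset.cons_induction with
  | empty => simpa using const 0 x
  | cons i s hi ih =>
    simp only [Finset.sum_cons]
    exact (h i (Finset.mem_cons_self i s)).add
      (ih fun j hj => h j (Finset.mem_cons_of_mem hj))

end HasSecondDerivAt

theorem ContDiffOn.hasSecondDerivAt_comp_affine {φ : ℝ → ℝ} {s : Set ℝ}
    (hφ : ContDiffOn ℝ 2 φ s) (hs : IsOpen s) {c σ x : ℝ} (hx : c + x * σ ∈ s) :
    HasSecondDerivAt (fun r => φ (c + r * σ)) (deriv (deriv φ) (c + x * σ) * σ ^ 2) x := by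
  have affine : ∀ r : ℝ, HasDerivAt (fun r => c + r * σ) σ r := fun r => by
    simpa using ((hasDerivAt_id r).mul_const σ).const_add c
  have hφ' : ContDiffOn ℝ 1 (deriv φ) s := hφ.deriv_of_isOpen hs (by norm_num)
  refine ⟨fun r => deriv φ (c + r * σ) * σ,
    ((affine x).continuousAt.eventually_mem (hs.mem_nhds hx)).mono fun r hr => ?_, ?_⟩
  · exact ((hφ.differentiableOn (by norm_num) _ hr).differentiableAt
      (hs.mem_nhds hr)).hasDerivAt.comp r (affine r)
  · simpa [sq, mul_assoc] using (((hφ'.differentiableOn one_ne_zero _ hx).differentiableAt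
      (hs.mem_nhds hx)).hasDerivAt.comp x (affine x)).mul_const σ

theorem d2E_self (E : (ℤ → ℝ) → ℝ) (y u : ℤ → ℝ) :
    d2E E y u u = deriv (deriv fun r : ℝ => E (y + r • u)) 0 := by
  have hline : ∀ s : ℝ, deriv (fun t : ℝ => E (y + s • u + t • u)) 0
      = deriv (fun r : ℝ => E (y + r • u)) s := fun s => by
    simpa [add_smul, add_assoc] using deriv_comp_const_add (fun r : ℝ => E (y + r • u)) s 0
  simp only [d2E, hline]

theorem bD_yF_add_smul {N : ℕ} (hN : (N : ℝ) ≠ 0) (F r : ℝ) (u : ℤ → ℝ) (ℓ : ℤ) :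
    bD N (yF N F + r • u) ℓ = F + r * bD N u ℓ := by
  simp only [bD, yF, Pi.add_apply, Pi.smul_apply, smul_eq_mul]
  push_cast
  field_simp
  ring

theorem bD_periodic {N : ℕ} {u : ℤ → ℝ} {p : ℤ} (hu : Function.Periodic u p) :
    Function.Periodic (bD N u) p := fun ℓ => by
  simp only [bD]
  rw [show ℓ + p - 1 = ℓ - 1 + p by ring, hu, hu]

theorem cD2_eq_bD_sub (N : ℕ) (u : ℤ → ℝ) (ℓ : ℤ) :
    cD2 N u ℓ = N * (bD N u (ℓ + 1) - bD N u ℓ) := by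
  simp only [cD2, bD, add_sub_cancel_right]
  ring

theorem nl2_sq (N : ℕ) (v : ℤ → ℝ) : nl2 N v ^ 2 = (N : ℝ)⁻¹ * ∑ ℓ ∈ idx N, v ℓ ^ 2 :=
  Real.sq_sqrt (by positivity)

theorem hasSecondDerivAt_Eqnl_yF {N : ℕ} (hN : (N : ℝ) ≠ 0) (K : ℕ) {φ : ℝ → ℝ}
    (hφ : ContDiffOn ℝ 2 φ (Set.Ioi 0)) {F : ℝ} (hF : 0 < F) (u : ℤ → ℝ) :
    HasSecondDerivAt (fun r => Eqnl N K φ (yF N F + r • u))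
      ((N : ℝ)⁻¹ * ((∑ ℓ ∈ idx N, deriv (deriv φ) F * bD N u ℓ ^ 2)
        + (∑ ℓ ∈ aQnl K, deriv (deriv φ) (2 * F) * (bD N u ℓ + bD N u (ℓ + 1)) ^ 2)
        + ∑ ℓ ∈ idx N \ aQnl K, (deriv (deriv φ) (2 * F) * (2 * bD N u ℓ) ^ 2
            + deriv (deriv φ) (2 * F) * (2 * bD N u (ℓ + 1)) ^ 2) / 2)) 0 := by
  have bond : ∀ c σ : ℝ, 0 < c →
      HasSecondDerivAt (fun r => φ (c + r * σ)) (deriv (deriv φ) c * σ ^ 2) 0 :=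
    fun c σ hc => by
      simpa using hφ.hasSecondDerivAt_comp_affine isOpen_Ioi (x := 0) (by simpa using hc)
  have h2F : 0 < 2 * F := by positivity
  have hline : (fun r => Eqnl N K φ (yF N F + r • u)) = fun r => (N : ℝ)⁻¹ *
      ((∑ ℓ ∈ idx N, φ (F + r * bD N u ℓ))
        + (∑ ℓ ∈ aQnl K, φ (2 * F + r * (bD N u ℓ + bD N u (ℓ + 1))))
        + ∑ ℓ ∈ idx N \ aQnl K,
            (φ (2 * F + r * (2 * bD N u ℓ)) + φ (2 * F + r * (2 * bD N u (ℓ + 1)))) / 2) := by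
    funext r
    simp only [Eqnl, bD_yF_add_smul hN,
      show ∀ x y, F + r * x + (F + r * y) = 2 * F + r * (x + y) from fun _ _ => by ring,
      show ∀ x, 2 * (F + r * x) = 2 * F + r * (2 * x) from fun _ => by ring]
  rw [hline]
  exact (((HasSecondDerivAt.sum fun ℓ _ => bond F (bD N u ℓ) hF).add
    (HasSecondDerivAt.sum fun ℓ _ => bond (2 * F) _ h2F)).add
    (HasSecondDerivAt.sum fun ℓ _ =>
      ((bond (2 * F) _ h2F).add (bond (2 * F) _ h2F)).div_const 2)).const_mul _

theorem sum_Icc_comp_add_one {M : Type*} [AddCommMonoid M] (g : ℤ → M) {a b : ℤ}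
    (hab : g (b + 1) = g a) : ∑ ℓ ∈ Finset.Icc a b, g (ℓ + 1) = ∑ ℓ ∈ Finset.Icc a b, g ℓ := by
  rcases lt_or_ge b a with hba | hab'
  · simp [Finset.Icc_eq_empty_of_lt hba]
  have hshift : ∑ ℓ ∈ Finset.Icc a b, g (ℓ + 1) = ∑ ℓ ∈ Finset.Icc (a + 1) (b + 1), g ℓ := by
    rw [← Finset.map_add_right_Icc, Finset.sum_map]
    rfl
  rw [hshift, ← Finset.insert_Icc_right_eq_Icc_add_one (by omega),
    Finset.sum_insert (by simp), hab, ← Finset.sum_insert (s := Finset.Icc (a + 1) b) (by simp),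
    Finset.insert_Icc_add_one_left_eq_Icc hab']

theorem qnl_quadratic_form {N : ℕ} {A : Finset ℤ} (hA : A ⊆ idx N) {a : ℤ → ℝ}
    (ha : Function.Periodic a (2 * N)) (c₁ c₂ : ℝ) :
    (∑ ℓ ∈ idx N, c₁ * a ℓ ^ 2) + (∑ ℓ ∈ A, c₂ * (a ℓ + a (ℓ + 1)) ^ 2)
        + ∑ ℓ ∈ idx N \ A, (c₂ * (2 * a ℓ) ^ 2 + c₂ * (2 * a (ℓ + 1)) ^ 2) / 2
      = (c₁ + 4 * c₂) * ∑ ℓ ∈ idx N, a ℓ ^ 2 - c₂ * ∑ ℓ ∈ A, (a (ℓ + 1) - a ℓ) ^ 2 := by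
  set pair : ℤ → ℝ := fun ℓ => 2 * c₂ * (a ℓ ^ 2 + a (ℓ + 1) ^ 2)
  have hshift : ∑ ℓ ∈ idx N, a (ℓ + 1) ^ 2 = ∑ ℓ ∈ idx N, a ℓ ^ 2 :=
    sum_Icc_comp_add_one (fun ℓ => a ℓ ^ 2) <| by
      rw [show (N : ℤ) + 1 = -N + 1 + 2 * N by ring, ha]
  have hpair : ∑ ℓ ∈ idx N, pair ℓ = 4 * c₂ * ∑ ℓ ∈ idx N, a ℓ ^ 2 := by
    simp only [pair, ← Finset.mul_sum, Finset.sum_add_distrib, hshift]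
    ring
  have hatom : ∑ ℓ ∈ A, c₂ * (a ℓ + a (ℓ + 1)) ^ 2
      = ∑ ℓ ∈ A, pair ℓ - c₂ * ∑ ℓ ∈ A, (a (ℓ + 1) - a ℓ) ^ 2 := by
    rw [Finset.mul_sum, ← Finset.sum_sub_distrib]
    exact Finset.sum_congr rfl fun ℓ _ => by ring
  have hcont : ∑ ℓ ∈ idx N \ A, (c₂ * (2 * a ℓ) ^ 2 + c₂ * (2 * a (ℓ + 1)) ^ 2) / 2
      = ∑ ℓ ∈ idx N \ A, pair ℓ :=
    Finset.sum_congr rfl fun ℓ _ => by ring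
  rw [hatom, hcont, ← Finset.mul_sum]
  linear_combination Finset.sum_sdiff hA (f := pair) + hpair

theorem stmt7_general (N K : ℕ) (hK2 : K + 2 ≤ N)
    (φ : ℝ → ℝ) (hφ : ContDiffOn ℝ 2 φ (Set.Ioi 0)) (F : ℝ) (hF : 0 < F) :
    ∀ u ∈ uSet N,
      d2E (Eqnl N K φ) (yF N F) u u
        = (deriv (deriv φ) F + 4 * deriv (deriv φ) (2 * F)) * (nl2 N (bD N u)) ^ 2
          - (N : ℝ)⁻¹ ^ 3 * deriv (deriv φ) (2 * F) * ∑ ℓ ∈ aQnl K, (cD2 N u ℓ) ^ 2 := by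
  rintro u ⟨hu, -⟩
  have hN : (N : ℝ) ≠ 0 := by exact_mod_cast (by omega : N ≠ 0)
  have hA : aQnl K ⊆ idx N := fun ℓ hℓ => by
    simp only [aQnl, idx, Finset.mem_Icc] at hℓ ⊢
    omega
  rw [d2E_self, (hasSecondDerivAt_Eqnl_yF hN K hφ hF u).deriv_deriv,
    qnl_quadratic_form hA (bD_periodic hu), nl2_sq]
  simp only [cD2_eq_bD_sub, mul_pow, ← Finset.mul_sum]
  field_simp

theorem stmt7 (N K : ℕ) (hN : 2 ≤ N) (hK1 : 1 ≤ K) (hK2 : K + 2 ≤ N)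
    (φ : ℝ → ℝ) (hφ : ContDiffOn ℝ 2 φ (Set.Ioi 0)) (F : ℝ) (hF : 0 < F) :
    ∀ u ∈ uSet N,
      d2E (Eqnl N K φ) (yF N F) u u
        = (deriv (deriv φ) F + 4 * deriv (deriv φ) (2 * F)) * (nl2 N (bD N u)) ^ 2
          - (N : ℝ)⁻¹ ^ 3 * deriv (deriv φ) (2 * F) * ∑ ℓ ∈ aQnl K, (cD2 N u ℓ) ^ 2 :=
  stmt7_general N K hK2 φ hφ F hF
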